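/- Let G be a finite directed graph, s a vertex, and X a partial observation with (s,0) ∈ X such that every (v,t) ∈ X satisfies that v is reachable from s and dist(s,v) ≤ t. Let T₀ be any shortest-path arborescence of G rooted at s, and let T be the subgraph of T₀ formed by the union of the T₀-paths from s to the vertices occurring in X. Then T is a bounded consistent tree w.r.t. X, and for every bounded consistent tree T* w.r.t. X, the number of edges of T satisfies |E(T)| ≤ |X| · |E(T*)|. (This is the |X|-factor approximation guarantee for the minimum bounded consistent tree problem.) -/

import Mathlib

/-!
Every path of the shortest-path arborescence `T₀` to an observed vertex `v` has length
`dist(s,v)`; this is at most `t` for `(v,t) ∈ X`, which gives bounded consistency of `T`, and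
at most the length of the path to `v` in any bounded consistent tree `T*`. A path in an
arborescence never repeats a vertex, so its length is at most `|E(T*)|`. Since `E(T)` is the
union of the edge sets of `|X|` such paths, `|E(T)| ≤ |X| · |E(T*)|`.
-/

/-- `IsWalk E u v l`: the nonempty list `l` of vertices is a walk from `u` to `v`
along the edge relation `E` (consecutive vertices are joined by an edge). -/
def IsWalk {V : Type*} (E : V → V → Prop) (u v : V) (l : List V) : Prop :=
  l.head? = some u ∧ l.getLast? = some v ∧ l.Chain' E

/-- The length (number of edges) of a walk given by its list of vertices. -/
def wlen {V : Type*} (l : List V) : ℕ := l.length - 1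

/-- `v` is reachable from `u` along the edge relation `E`. -/
def Reach {V : Type*} (E : V → V → Prop) (u v : V) : Prop := ∃ l, IsWalk E u v l

/-- The distance from `u` to `v`: the minimum length of a walk from `u` to `v`
(equal to `0` by convention when `v` is not reachable from `u`). -/
noncomputable def gdist {V : Type*} (E : V → V → Prop) (u v : V) : ℕ :=
  sInf {n | ∃ l, IsWalk E u v l ∧ wlen l = n}

/-- An arborescence of the graph with edge relation `E`, rooted at `s`:
a subgraph (given by its vertex set and edge relation) containing `s`,
in which every vertex is joined from `s` by a unique path. -/
structure Arb {V : Type*} (E : V → V → Prop) (s : V) where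
  verts : Set V
  edges : V → V → Prop
  edges_sub : ∀ u v, edges u v → E u v
  edges_mem : ∀ u v, edges u v → u ∈ verts ∧ v ∈ verts
  root_mem : s ∈ verts
  unique_walk : ∀ v ∈ verts, ∃! l, IsWalk edges s v l

section

open List

variable {V : Type*}

def walkEdges (l : List V) : Set (V × V) := {e | [e.1, e.2] <:+: l}

lemma walkEdges_nil : walkEdges ([] : List V) = ∅ := by
  ext; simp [walkEdges]

lemma walkEdges_singleton (x : V) : walkEdges [x] = ∅ := by
  ext; simp [walkEdges, infix_cons_iff]

lemma walkEdges_cons_cons (x y : V) (t : List V) :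
    walkEdges (x :: y :: t) = insert (x, y) (walkEdges (y :: t)) := by
  ext ⟨a, b⟩
  simp [walkEdges, infix_cons_iff (l₂ := y :: t), cons_prefix_cons]

lemma ncard_walkEdges_le [Finite V] : ∀ l : List V, (walkEdges l).ncard ≤ wlen l
  | [] => by simp [walkEdges_nil]
  | [x] => by simp [walkEdges_singleton]
  | x :: y :: t => by
    rw [walkEdges_cons_cons]
    calc _ ≤ (walkEdges (y :: t)).ncard + 1 := Set.ncard_insert_le _ _
      _ ≤ wlen (y :: t) + 1 := by gcongr; exact ncard_walkEdges_le _
      _ = wlen (x :: y :: t) := by simp [wlen]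

lemma ncard_walkEdges_of_nodup [Finite V] :
    ∀ {l : List V}, l.Nodup → (walkEdges l).ncard = wlen l
  | [], _ => by simp [walkEdges_nil, wlen]
  | [x], _ => by simp [walkEdges_singleton, wlen]
  | x :: y :: t, h => by
    have hx : (x, y) ∉ walkEdges (y :: t) :=
      fun hxy => (nodup_cons.1 h).1 (hxy.subset (by simp))
    rw [walkEdges_cons_cons, Set.ncard_insert_of_notMem hx, ncard_walkEdges_of_nodup h.of_cons]
    simp [wlen]

lemma isChain_iff_walkEdges_subset {R : V → V → Prop} {l : List V} :
    l.IsChain R ↔ walkEdges l ⊆ {e | R e.1 e.2} :=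
  ⟨fun h e he => by simpa using h.infix he,
    fun h => isChain_iff_forall_rel_of_append_cons_cons.2 fun a b l₁ l₂ hl =>
      h (show (a, b) ∈ walkEdges l from ⟨l₁, l₂, by simp [hl]⟩)⟩

section IsWalk

variable {E F : V → V → Prop} {u v : V} {l : List V}

lemma IsWalk.mono (h : IsWalk E u v l) (hEF : ∀ a b, E a b → F a b) : IsWalk F u v l :=
  ⟨h.1, h.2.1, h.2.2.imp fun {a b} => hEF a b⟩

lemma IsWalk.left_mem (h : IsWalk E u v l) : u ∈ l :=
  mem_of_mem_head? h.1

lemma IsWalk.right_mem (h : IsWalk E u v l) : v ∈ l :=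
  mem_of_mem_getLast? h.2.1

lemma IsWalk.rel_of_infix (h : IsWalk E u v l) {a b : V} (hab : [a, b] <:+: l) : E a b :=
  isChain_iff_walkEdges_subset.1 h.2.2 (show (a, b) ∈ walkEdges l from hab)

lemma IsWalk.take (h : IsWalk E u v l) {i : ℕ} (hi : i < l.length) :
    IsWalk E u l[i] (l.take (i + 1)) := by
  refine ⟨?_, ?_, h.2.2.prefix (take_prefix _ _)⟩
  · simp [head?_take, h.1]
  · simp [getLast?_take, getElem?_eq_getElem hi]

lemma gdist_le_wlen (h : IsWalk E u v l) : gdist E u v ≤ wlen l :=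
  Nat.sInf_le ⟨l, h, rfl⟩

end IsWalk

namespace Arb

variable {E : V → V → Prop} {s v : V} {l : List V} (T : Arb E s)

lemma mem_verts_of_isWalk (h : IsWalk T.edges s v l) : ∀ w ∈ l, w ∈ T.verts :=
  h.2.2.induction _ l (fun _ _ hxy _ => (T.edges_mem _ _ hxy).2) fun hl => by
    rw [show l.head hl = s by simpa [head?_eq_some_head hl] using h.1]
    exact T.root_mem

/-- Two occurrences of a vertex on a path would give two different paths to it. -/
lemma nodup_of_isWalk (h : IsWalk T.edges s v l) : l.Nodup := by
  refine nodup_iff_injective_get.2 fun i j hij => Fin.ext ?_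
  have hprefix (k : Fin l.length) : IsWalk T.edges s (l.get k) (l.take (k + 1)) := h.take k.2
  have hvert := T.mem_verts_of_isWalk h _ (l.get_mem i)
  have := congrArg length ((T.unique_walk _ hvert).unique (hprefix i) (hij ▸ hprefix j))
  simp only [length_take] at this
  omega

lemma wlen_le_ncard_edges [Finite V] (h : IsWalk T.edges s v l) :
    wlen l ≤ {e : V × V | T.edges e.1 e.2}.ncard := by
  rw [← ncard_walkEdges_of_nodup (T.nodup_of_isWalk h)]
  exact Set.ncard_le_ncard (isChain_iff_walkEdges_subset.1 h.2.2) (Set.toFinite _)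

variable {ι : Type*}

def pathUnion (P : Set ι) (f : ι → V) (hf : ∀ i ∈ P, f i ∈ T.verts) (hP : P.Nonempty) :
    Arb E s where
  verts := {u | ∃ i ∈ P, ∃ l, IsWalk T.edges s (f i) l ∧ u ∈ l}
  edges u u' := ∃ i ∈ P, ∃ l, IsWalk T.edges s (f i) l ∧ [u, u'] <:+: l
  edges_sub _ _ := fun ⟨_, _, _, hl, hab⟩ => T.edges_sub _ _ (hl.rel_of_infix hab)
  edges_mem _ _ := fun ⟨i, hi, l, hl, hab⟩ =>
    ⟨⟨i, hi, l, hl, hab.subset (by simp)⟩, ⟨i, hi, l, hl, hab.subset (by simp)⟩⟩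
  root_mem := by
    obtain ⟨i, hi⟩ := hP
    obtain ⟨l, hl⟩ := (T.unique_walk _ (hf i hi)).exists
    exact ⟨i, hi, l, hl, hl.left_mem⟩
  unique_walk := by
    rintro _ ⟨i, hi, l, hl, hv⟩
    obtain ⟨k, hk, rfl⟩ := getElem_of_mem hv
    refine ⟨l.take (k + 1), ⟨(hl.take hk).1, (hl.take hk).2.1, ?_⟩, fun m hm => ?_⟩
    · exact isChain_iff_walkEdges_subset.2 fun e he =>
        ⟨i, hi, l, hl, he.trans (take_prefix _ _).isInfix⟩
    · exact (T.unique_walk _ (T.mem_verts_of_isWalk hl _ hv)).unique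
        (hm.mono fun _ _ ⟨_, _, _, hl', hab⟩ => hl'.rel_of_infix hab) (hl.take hk)

section

variable {P : Set ι} {f : ι → V} {hf : ∀ i ∈ P, f i ∈ T.verts} {hP : P.Nonempty}

lemma mem_pathUnion_verts {i : ι} (hi : i ∈ P) : f i ∈ (T.pathUnion P f hf hP).verts :=
  have ⟨l, hl⟩ := (T.unique_walk _ (hf i hi)).exists
  ⟨i, hi, l, hl, hl.right_mem⟩

lemma pathUnion_edges_le {u u' : V} (h : (T.pathUnion P f hf hP).edges u u') : T.edges u u' :=
  have ⟨_, _, _, hl, hab⟩ := h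
  hl.rel_of_infix hab

end

lemma ncard_edges_pathUnion_le [Finite V] (X : Finset ι) {f : ι → V}
    {hf : ∀ i ∈ (X : Set ι), f i ∈ T.verts} {hX : (X : Set ι).Nonempty} (k : ℕ)
    (hk : ∀ i ∈ X, ∀ l, IsWalk T.edges s (f i) l → wlen l ≤ k) :
    {e : V × V | (T.pathUnion X f hf hX).edges e.1 e.2}.ncard ≤ X.card * k := by
  have hunion : {e : V × V | (T.pathUnion X f hf hX).edges e.1 e.2} =
      ⋃ i ∈ X, {e | ∃ l, IsWalk T.edges s (f i) l ∧ e ∈ walkEdges l} := by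
    ext; simp [pathUnion, walkEdges]
  have hpath (i) (hi : i ∈ X) :
      {e | ∃ l, IsWalk T.edges s (f i) l ∧ e ∈ walkEdges l}.ncard ≤ k := by
    obtain ⟨l, hl, huniq⟩ := T.unique_walk _ (hf i hi)
    have : {e | ∃ l, IsWalk T.edges s (f i) l ∧ e ∈ walkEdges l} = walkEdges l :=
      Set.ext fun e => ⟨fun ⟨m, hm, he⟩ => huniq m hm ▸ he, fun he => ⟨l, hl, he⟩⟩
    rw [this]
    exact (ncard_walkEdges_le l).trans (hk i hi l hl)
  calc _ ≤ ∑ i ∈ X, {e | ∃ l, IsWalk T.edges s (f i) l ∧ e ∈ walkEdges l}.ncard :=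
        hunion ▸ X.set_ncard_biUnion_le _
    _ ≤ ∑ _i ∈ X, k := Finset.sum_le_sum hpath
    _ = X.card * k := by simp

end Arb

end

/-- The `|X|`-factor approximation guarantee for the minimum bounded consistent
tree problem: given a partial observation `X` each of whose points `(v,t)`
satisfies `dist(s,v) ≤ t`, and a shortest-path arborescence `T₀` rooted at `s`,
the union `T` of the `T₀`-paths from `s` to the observed vertices is a bounded
consistent tree w.r.t. `X`, and its number of edges is at most `|X|` times the
number of edges of any bounded consistent tree `T*` w.r.t. `X`. -/
theorem stmt_7 {V : Type*} [Fintype V] (E : V → V → Prop) (s : V)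
    (X : Finset (V × ℕ)) (hsX : (s, 0) ∈ X)
    (hX : ∀ p ∈ X, Reach E s p.1 ∧ gdist E s p.1 ≤ p.2)
    (T₀ : Arb E s) (hT₀v : T₀.verts = {v | Reach E s v})
    (hT₀d : ∀ v ∈ T₀.verts, ∀ l, IsWalk T₀.edges s v l → wlen l = gdist E s v) :
    ∃ T : Arb E s,
      T.verts = {u | ∃ p ∈ X, ∃ l, IsWalk T₀.edges s p.1 l ∧ u ∈ l} ∧
      T.edges = (fun u u' => ∃ p ∈ X, ∃ l, IsWalk T₀.edges s p.1 l ∧ [u, u'] <:+: l) ∧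
      (∀ p ∈ X, p.1 ∈ T.verts ∧ ∀ l, IsWalk T.edges s p.1 l → wlen l ≤ p.2) ∧
      ∀ T' : Arb E s,
        (∀ p ∈ X, p.1 ∈ T'.verts ∧ ∀ l, IsWalk T'.edges s p.1 l → wlen l ≤ p.2) →
        Set.ncard {e : V × V | T.edges e.1 e.2} ≤
          X.card * Set.ncard {e : V × V | T'.edges e.1 e.2} := by
  have hXT₀ : ∀ p ∈ (X : Set (V × ℕ)), p.1 ∈ T₀.verts :=
    fun p hp => hT₀v ▸ (hX p hp).1
  let T := T₀.pathUnion X Prod.fst hXT₀ ⟨(s, 0), hsX⟩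
  refine ⟨T, rfl, rfl, fun p hp => ⟨?_, fun l hl => ?_⟩, fun T' hT' => ?_⟩
  · exact T₀.mem_pathUnion_verts hp
  · rw [hT₀d _ (hXT₀ p hp) l (hl.mono fun _ _ => T₀.pathUnion_edges_le)]
    exact (hX p hp).2
  · refine T₀.ncard_edges_pathUnion_le X _ fun p hp l hl => ?_
    obtain ⟨m, hm⟩ := (T'.unique_walk p.1 (hT' p hp).1).exists
    calc wlen l = gdist E s p.1 := hT₀d _ (hXT₀ p hp) l hl
      _ ≤ wlen m := gdist_le_wlen (hm.mono T'.edges_sub)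
      _ ≤ _ := T'.wlen_le_ncard_edges hm
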